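/- Under the assumptions of the global convergence theorem for the stabilized type-I Anderson acceleration (nonexpansive $f$ with a fixed point, accelerated steps $x^{k+1} = x^k - H_k g_k$ with $\|H_k\|_2 \leq C$ taken only when $\|g_k\|_2 \leq D\bar{U}(i+1)^{-(1+\epsilon)}$ where $i$ counts prior accelerated steps, and KM steps $x^{k+1} = (1-\alpha)x^k + \alpha f(x^k)$ otherwise), the residuals satisfy $\lim_{k\to\infty} \|g(x^k)\|_2 = 0$. -/

import Mathlib

/-!
Fix a fixed point `y` and let `d k = ‖x k - y‖`. A KM step decreases `d ^ 2` by
`α (1 - α) ‖g (x k)‖ ^ 2`; an accelerated step increases `d` by at most `C ‖g (x k)‖`, and the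
safeguard bounds these residuals by a summable sequence, because distinct accelerated steps carry
distinct counters `i`. Hence `d` stays bounded, the accelerated steps raise `d ^ 2` by a summable
total, and telescoping gives `∑ ‖g (x k)‖ ^ 2 < ∞`.
-/

open Filter Topology

lemma summable_nat_add_one_rpow {p : ℝ} (hp : p < -1) :
    Summable (fun i : ℕ => ((i : ℝ) + 1) ^ p) := by
  simpa using (summable_nat_add_iff 1).2 (Real.summable_nat_rpow.2 hp)

lemma summable_ite_comp_count {E : Type*} [NormedAddCommGroup E] [CompleteSpace E]
    (p : ℕ → Prop) [DecidablePred p] {b : ℕ → E} (hb : Summable b) :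
    Summable (fun k => if p k then b (Nat.count p k) else 0) := by
  have hinj : Function.Injective (fun k : {k // p k} => Nat.count p k) :=
    fun m n h => Subtype.ext (Nat.count_injective m.2 n.2 h)
  have := (summable_subtype_iff_indicator (s := {k | p k})
    (f := fun k => b (Nat.count p k))).1 (hb.comp_injective hinj)
  exact this.congr fun k => Set.indicator_apply _ _ _

lemma le_add_mul_tsum_of_le_add_mul {d w : ℕ → ℝ} {C : ℝ} (hC : 0 ≤ C) (hw : ∀ k, 0 ≤ w k)
    (hws : Summable w) (hstep : ∀ k, d (k + 1) ≤ d k + C * w k) (k : ℕ) :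
    d k ≤ d 0 + C * ∑' j, w j := by
  have hpartial : d k ≤ d 0 + C * ∑ j ∈ Finset.range k, w j := by
    induction k with
    | zero => simp
    | succ k ih =>
      rw [Finset.sum_range_succ]
      linarith [hstep k]
  have hsum := hws.sum_le_tsum (Finset.range k) (fun j _ => hw j)
  linarith [mul_le_mul_of_nonneg_left hsum hC]

lemma summable_of_add_le_sub_add {a u e : ℕ → ℝ} (ha : ∀ k, 0 ≤ a k) (hu : ∀ k, 0 ≤ u k)
    (he : ∀ k, 0 ≤ e k) (hes : Summable e) (hstep : ∀ k, a k + u (k + 1) ≤ u k + e k) :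
    Summable a := by
  refine summable_of_sum_range_le ha (c := u 0 + ∑' k, e k) fun N => ?_
  have htelescope : ∑ k ∈ Finset.range N, a k + u N ≤ u 0 + ∑ k ∈ Finset.range N, e k := by
    induction N with
    | zero => simp
    | succ N ih =>
      rw [Finset.sum_range_succ, Finset.sum_range_succ]
      linarith [hstep N]
  linarith [hu N, hes.sum_le_tsum (Finset.range N) (fun k _ => he k)]

lemma tendsto_zero_of_summable_sq {r : ℕ → ℝ} (hr : ∀ k, 0 ≤ r k)
    (hs : Summable fun k => r k ^ 2) : Tendsto r atTop (𝓝 0) := by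
  have := hs.tendsto_atTop_zero.sqrt
  simpa [Real.sqrt_sq (hr _)] using this

theorem tendsto_zero_of_step_alternatives {d r w : ℕ → ℝ} {C β : ℝ} (hC : 0 ≤ C) (hβ : 0 < β)
    (hd : ∀ k, 0 ≤ d k) (hr : ∀ k, 0 ≤ r k) (hw : ∀ k, 0 ≤ w k) (hws : Summable w)
    (hstep : ∀ k, (r k ≤ w k ∧ d (k + 1) ≤ d k + C * w k) ∨
      d (k + 1) ^ 2 + β * r k ^ 2 ≤ d k ^ 2) :
    Tendsto r atTop (𝓝 0) := by
  have hdstep : ∀ k, d (k + 1) ≤ d k + C * w k := by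
    intro k
    rcases hstep k with ⟨-, h⟩ | h
    · exact h
    · have : d (k + 1) ≤ d k := by nlinarith [hd (k + 1), hd k, sq_nonneg (r k)]
      linarith [mul_nonneg hC (hw k)]
  set W := ∑' j, w j
  set M := d 0 + C * W
  have hdM : ∀ k, d k ≤ M := le_add_mul_tsum_of_le_add_mul hC hw hws hdstep
  have hwW : ∀ k, w k ≤ W := fun k => hws.le_tsum k (fun j _ => hw j)
  set K := 2 * C * M + (C ^ 2 + β) * W
  have hK : 0 ≤ K := by
    have := (hd 0).trans (hdM 0)
    have := (hw 0).trans (hwW 0)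
    positivity
  have henergy : ∀ k, β * r k ^ 2 + d (k + 1) ^ 2 ≤ d k ^ 2 + K * w k := by
    intro k
    rcases hstep k with ⟨hrw, hdw⟩ | h
    · have h1 : d (k + 1) ^ 2 ≤ (d k + C * w k) ^ 2 := pow_le_pow_left₀ (hd _) hdw 2
      have h2 : r k ^ 2 ≤ w k ^ 2 := pow_le_pow_left₀ (hr _) hrw 2
      have h3 : d k * w k ≤ M * w k := mul_le_mul_of_nonneg_right (hdM k) (hw k)
      have h4 : w k * w k ≤ W * w k := mul_le_mul_of_nonneg_right (hwW k) (hw k)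
      nlinarith [mul_le_mul_of_nonneg_left h3 hC, mul_le_mul_of_nonneg_left h4 (sq_nonneg C)]
    · nlinarith [mul_nonneg hK (hw k)]
  have hsq : Summable fun k => β * r k ^ 2 :=
    summable_of_add_le_sub_add (fun k => by positivity) (fun k => sq_nonneg (d k))
      (fun k => mul_nonneg hK (hw k)) (hws.mul_left K) henergy
  exact tendsto_zero_of_summable_sq hr ((summable_mul_left_iff hβ.ne').1 hsq)

section KrasnoselskiiMann

variable {E : Type*} [NormedAddCommGroup E] [InnerProductSpace ℝ E]

lemma norm_one_sub_smul_add_smul_sq (α : ℝ) (a b : E) :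
    ‖(1 - α) • a + α • b‖ ^ 2 =
      (1 - α) * ‖a‖ ^ 2 + α * ‖b‖ ^ 2 - α * (1 - α) * ‖a - b‖ ^ 2 := by
  rw [norm_add_sq_real, norm_sub_sq_real, norm_smul, norm_smul, real_inner_smul_left,
    real_inner_smul_right, mul_pow, mul_pow, Real.norm_eq_abs, Real.norm_eq_abs, sq_abs, sq_abs]
  ring

lemma norm_averaged_sub_sq_add_le {f : E → E} (hf : ∀ a b, ‖f a - f b‖ ≤ ‖a - b‖) {y : E}
    (hy : f y = y) {α : ℝ} (hα : 0 ≤ α) (x : E) :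
    ‖(1 - α) • x + α • f x - y‖ ^ 2 + α * (1 - α) * ‖x - f x‖ ^ 2 ≤ ‖x - y‖ ^ 2 := by
  have hfx : ‖f x - y‖ ^ 2 ≤ ‖x - y‖ ^ 2 := by
    gcongr
    simpa [hy] using hf x y
  have hsplit : (1 - α) • x + α • f x - y = (1 - α) • (x - y) + α • (f x - y) := by module
  rw [hsplit, norm_one_sub_smul_add_smul_sq, sub_sub_sub_cancel_right]
  nlinarith

end KrasnoselskiiMann

theorem stmt_10_general (n : ℕ) (C D U ε α : ℝ)
    (hC : 0 < C) (hε : 0 < ε) (hα : α ∈ Set.Ioo (0:ℝ) 1)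
    (f : EuclideanSpace ℝ (Fin n) → EuclideanSpace ℝ (Fin n))
    (hf : ∀ a b, ‖f a - f b‖ ≤ ‖a - b‖)
    (hfix : ∃ y, f y = y)
    (g : EuclideanSpace ℝ (Fin n) → EuclideanSpace ℝ (Fin n))
    (hg : ∀ a, g a = a - f a)
    (x : ℕ → EuclideanSpace ℝ (Fin n))
    (acc : ℕ → Bool)
    (nAA : ℕ → ℕ)
    (hnAA : ∀ k, nAA k = ((Finset.range k).filter (fun j => acc j = true)).card)
    (hacc : ∀ k, acc k = true →
      (∃ H : EuclideanSpace ℝ (Fin n) →L[ℝ] EuclideanSpace ℝ (Fin n),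
        ‖H‖ ≤ C ∧ x (k + 1) = x k - H (g (x k))) ∧
      ‖g (x k)‖ ≤ D * U * ((nAA k : ℝ) + 1) ^ (-(1 + ε)))
    (hkm : ∀ k, acc k = false → x (k + 1) = (1 - α) • x k + α • f (x k)) :
    Filter.Tendsto (fun k => ‖g (x k)‖) Filter.atTop (nhds 0) := by
  obtain ⟨y, hy⟩ := hfix
  obtain ⟨hα0, hα1⟩ := hα
  set p : ℕ → Prop := fun j => acc j = true
  have hcount : ∀ k, nAA k = Nat.count p k := fun k => by
    rw [hnAA, Nat.count_eq_card_filter_range]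
  set w : ℕ → ℝ := fun k => if p k then D * U * ((Nat.count p k : ℝ) + 1) ^ (-(1 + ε)) else 0
  have hws : Summable w :=
    summable_ite_comp_count p ((summable_nat_add_one_rpow (by linarith)).mul_left (D * U))
  have hgw : ∀ k, acc k = true → ‖g (x k)‖ ≤ w k := fun k hk => by
    simpa [w, p, hk, ← hcount] using (hacc k hk).2
  refine tendsto_zero_of_step_alternatives (d := fun k => ‖x k - y‖) hC.le
    (mul_pos hα0 (sub_pos.2 hα1)) (fun k => norm_nonneg _) (fun k => norm_nonneg _)
    (fun k => ?_) hws (fun k => ?_)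
  · by_cases hk : acc k = true
    · exact (norm_nonneg _).trans (hgw k hk)
    · simp [w, p, hk]
  cases hk : acc k
  · right
    rw [hkm k hk, hg]
    exact norm_averaged_sub_sq_add_le hf hy hα0.le (x k)
  · left
    obtain ⟨H, hH, hx⟩ := (hacc k hk).1
    refine ⟨hgw k hk, ?_⟩
    calc ‖x (k + 1) - y‖ = ‖(x k - y) - H (g (x k))‖ := by rw [hx, sub_right_comm]
      _ ≤ ‖x k - y‖ + ‖H‖ * ‖g (x k)‖ := (norm_sub_le _ _).trans (by gcongr; exact H.le_opNorm _)
      _ ≤ ‖x k - y‖ + C * w k := by gcongr; exact hgw k hk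

theorem stmt_10 (n : ℕ) (C D U ε α : ℝ)
    (hC : 0 < C) (hD : 0 < D) (hU : 0 < U) (hε : 0 < ε) (hα : α ∈ Set.Ioo (0:ℝ) 1)
    (f : EuclideanSpace ℝ (Fin n) → EuclideanSpace ℝ (Fin n))
    (hf : ∀ a b, ‖f a - f b‖ ≤ ‖a - b‖)
    (hfix : ∃ y, f y = y)
    (g : EuclideanSpace ℝ (Fin n) → EuclideanSpace ℝ (Fin n))
    (hg : ∀ a, g a = a - f a)
    (x : ℕ → EuclideanSpace ℝ (Fin n))
    (acc : ℕ → Bool)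
    (nAA : ℕ → ℕ)
    (hnAA : ∀ k, nAA k = ((Finset.range k).filter (fun j => acc j = true)).card)
    (hacc : ∀ k, acc k = true →
      (∃ H : EuclideanSpace ℝ (Fin n) →L[ℝ] EuclideanSpace ℝ (Fin n),
        ‖H‖ ≤ C ∧ x (k + 1) = x k - H (g (x k))) ∧
      ‖g (x k)‖ ≤ D * U * ((nAA k : ℝ) + 1) ^ (-(1 + ε)))
    (hkm : ∀ k, acc k = false → x (k + 1) = (1 - α) • x k + α • f (x k)) :
    Filter.Tendsto (fun k => ‖g (x k)‖) Filter.atTop (nhds 0) :=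
  stmt_10_general n C D U ε α hC hε hα f hf hfix g hg x acc nAA hnAA hacc hkm
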